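/- Pareto characterization for arborescences: given a complete directed graph on [n] with strict rankings r_i of the outgoing edges of each node i, an arborescence τ (a spanning tree with all edges directed towards a root of out-degree 0, one chosen out-edge τ_i per non-root node) can be produced by a serial dictatorship — agents act in some order, each drawing her highest-ranked outgoing edge that does not create a directed cycle with edges drawn so far — if and only if τ is Pareto-optimal: no arborescence τ' satisfies r_i(τ'_i) ≤ r_i(τ_i) for all i with strict inequality for some i. -/

import Mathlib

/-- The agents that precede `i` in the action (sub)sequence `π`. -/
def prefixBefore {n : ℕ} (π : List (Fin n)) (i : Fin n) : List (Fin n) :=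
  π.takeWhile (fun j => j != i)

/-- A full action sequence: an ordering of all `n` agents. -/
def IsSeq {n : ℕ} (π : List (Fin n)) : Prop :=
  π.Nodup ∧ ∀ i : Fin n, i ∈ π

/-- `t` is an arborescence with root `root`: the root has no out-edge (encoded by
`t root = root`), every other node has a proper out-edge, and every node reaches the
root by iterating `t`. -/
def IsArb {n : ℕ} (t : Fin n → Fin n) (root : Fin n) : Prop :=
  t root = root ∧ (∀ i, i ≠ root → t i ≠ i) ∧ ∀ i, ∃ k, t^[k] i = root

/-- The edge relation of the edges drawn by agents in list `P` (under out-map `t`). -/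
def drel {n : ℕ} (t : Fin n → Fin n) (P : List (Fin n)) : Fin n → Fin n → Prop :=
  fun a b => a ∈ P ∧ t a = b ∧ a ≠ b

/-- The serial dictatorship with ordering `π` produces the out-edges `t`: each agent
draws her top-ranked outgoing edge among those not closing a directed cycle with the
edges drawn by her predecessors (an edge `(i,j)` is forbidden iff `i` is reachable
from `j`); she draws nothing (`t i = i`) only if all edges are forbidden, which is
expressed via the rank of the self-loop being worst. -/
def ProducedA {n : ℕ} (r : Fin n → Fin n → ℕ) (t : Fin n → Fin n)
    (π : List (Fin n)) : Prop :=
  ∀ i : Fin n,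
    (t i ≠ i → ¬ Relation.ReflTransGen (drel t (prefixBefore π i)) (t i) i) ∧
    ∀ j, ¬ Relation.ReflTransGen (drel t (prefixBefore π i)) j i → r i (t i) ≤ r i j

/-!
If a serial dictatorship produces `t` and an arborescence `t'` weakly dominates it, look at the
first agent `i` (in the order of play) with `t' i ≠ t i`. She strictly prefers `t' i`, so that edge
was forbidden to her: `t' i` reaches `i` through edges drawn before her turn, which `t'` shares,
and `t'` contains a cycle.

Conversely, in a Pareto-optimal arborescence every edge that `i` prefers to `t i` leads to a
descendant of `i`, since redirecting `i` to any other node keeps an arborescence. When agents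
act in order of decreasing depth, all descendants of `i` have drawn their edges before `i`, so
every preferred edge is forbidden to her and she draws `t i`.
-/

section

variable {n : ℕ}

theorem prefixBefore_cons_self (i : Fin n) (l : List (Fin n)) :
    prefixBefore (i :: l) i = [] := by
  simp [prefixBefore]

theorem prefixBefore_cons_of_ne {b i : Fin n} (h : b ≠ i) (l : List (Fin n)) :
    prefixBefore (b :: l) i = b :: prefixBefore l i := by
  simp [prefixBefore, h]

theorem exists_mem_forall_mem_prefixBefore_not (p : Fin n → Prop) {π : List (Fin n)}
    (h : ∃ i ∈ π, p i) : ∃ i ∈ π, p i ∧ ∀ a ∈ prefixBefore π i, ¬ p a := by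
  induction π with
  | nil => simp at h
  | cons b l ih =>
    by_cases hb : p b
    · exact ⟨b, List.mem_cons_self, hb, by simp [prefixBefore_cons_self]⟩
    obtain ⟨i, hi, hpi⟩ := h
    have hil : i ∈ l := (List.mem_cons.mp hi).resolve_left (by rintro rfl; exact hb hpi)
    obtain ⟨j, hjl, hpj, hfirst⟩ := ih ⟨i, hil, hpi⟩
    have hbj : b ≠ j := by rintro rfl; exact hb hpj
    refine ⟨j, List.mem_cons_of_mem _ hjl, hpj, ?_⟩
    simp only [prefixBefore_cons_of_ne hbj, List.mem_cons, forall_eq_or_imp]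
    exact ⟨hb, hfirst⟩

theorem mem_prefixBefore_of_pairwise {R : Fin n → Fin n → Prop} {π : List (Fin n)}
    (hπ : π.Pairwise R) {i x : Fin n} (hi : i ∈ π) (hx : x ∈ π) (hxi : x ≠ i) (hR : ¬ R i x) :
    x ∈ prefixBefore π i := by
  induction π with
  | nil => simp at hi
  | cons b l ih =>
    obtain ⟨hb, hl⟩ := List.pairwise_cons.mp hπ
    by_cases hbi : b = i
    · subst hbi
      exact absurd (hb x ((List.mem_cons.mp hx).resolve_left hxi)) hR
    rw [prefixBefore_cons_of_ne hbi]
    by_cases hxb : x = b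
    · exact hxb ▸ List.mem_cons_self
    exact List.mem_cons_of_mem _ <| ih hl ((List.mem_cons.mp hi).resolve_left (Ne.symm hbi))
      ((List.mem_cons.mp hx).resolve_left hxb)

theorem exists_iterate_eq_of_reflTransGen_drel {t t' : Fin n → Fin n} {P : List (Fin n)}
    {x y : Fin n} (h : Relation.ReflTransGen (drel t P) x y) (hP : ∀ a ∈ P, t' a = t a) :
    ∃ m, t'^[m] x = y := by
  induction h with
  | refl => exact ⟨0, rfl⟩
  | tail _ hbc ih =>
    obtain ⟨m, hm⟩ := ih
    obtain ⟨hbP, hb, -⟩ := hbc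
    exact ⟨m + 1, by rw [Function.iterate_succ_apply', hm, hP _ hbP, hb]⟩

namespace IsArb

variable {t : Fin n → Fin n} {root : Fin n}

theorem eq_root_of_iterate_succ_eq (ht : IsArb t root) {i : Fin n} {k : ℕ}
    (h : t^[k + 1] i = i) : i = root := by
  obtain ⟨K, hK⟩ := ht.2.2 i
  calc i = t^[(k + 1) * K] i := by rw [Function.iterate_mul, Function.iterate_fixed h]
    _ = t^[k * K] (t^[K] i) := by rw [← Function.iterate_add_apply, add_one_mul]
    _ = root := by rw [hK, Function.iterate_fixed ht.1]

theorem not_reflTransGen_drel_apply (ht : IsArb t root) (P : List (Fin n)) {i : Fin n}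
    (hti : t i ≠ i) : ¬ Relation.ReflTransGen (drel t P) (t i) i := by
  intro h
  obtain ⟨m, hm⟩ := exists_iterate_eq_of_reflTransGen_drel h (fun _ _ => rfl)
  have hroot := ht.eq_root_of_iterate_succ_eq (k := m) (by rwa [Function.iterate_succ_apply])
  exact hti (hroot ▸ ht.1)

theorem reflTransGen_drel_of_iterate_eq (ht : IsArb t root) {P : List (Fin n)} {i : Fin n}
    (hP : ∀ x, x ≠ i → (∃ k, t^[k] x = i) → x ∈ P) :
    ∀ (k : ℕ) (x : Fin n), t^[k] x = i → Relation.ReflTransGen (drel t P) x i := by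
  intro k
  induction k with
  | zero => rintro x rfl; exact .refl
  | succ k ih =>
    intro x hx
    by_cases hxi : x = i
    · exact hxi ▸ .refl
    have hxroot : x ≠ root := by
      rintro rfl
      exact hxi (Function.iterate_fixed ht.1 _ ▸ hx)
    rw [Function.iterate_succ_apply] at hx
    exact .head ⟨hP x hxi ⟨k + 1, hx⟩, rfl, (ht.2.1 x hxroot).symm⟩ (ih _ hx)

theorem update (ht : IsArb t root) {i j : Fin n} (hi : i ≠ root) (hj : ∀ k, t^[k] j ≠ i) :
    IsArb (Function.update t i j) root := by
  classical
  set t' := Function.update t i j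
  have ht'i : t' i = j := Function.update_self i j t
  have ht'_ne : ∀ a, a ≠ i → t' a = t a := fun a ha => Function.update_of_ne ha j t
  have hpath_j : ∀ l, t'^[l] j = t^[l] j := by
    intro l
    induction l with
    | zero => rfl
    | succ l ih =>
      rw [Function.iterate_succ_apply', Function.iterate_succ_apply', ih, ht'_ne _ (hj l)]
  have hreach : ∀ (k : ℕ) (x : Fin n), t^[k] x = root → ∃ m, t'^[m] x = root := by
    intro k
    induction k with
    | zero => exact fun x hx => ⟨0, hx⟩
    | succ k ih =>
      intro x hx
      by_cases hxi : x = i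
      · obtain ⟨K, hK⟩ := ht.2.2 j
        exact ⟨K + 1, by rw [Function.iterate_succ_apply, hxi, ht'i, hpath_j, hK]⟩
      · obtain ⟨m, hm⟩ := ih (t x) (by rwa [Function.iterate_succ_apply] at hx)
        exact ⟨m + 1, by rw [Function.iterate_succ_apply, ht'_ne _ hxi, hm]⟩
  refine ⟨by rw [ht'_ne _ hi.symm, ht.1], fun a ha => ?_, fun x => ?_⟩
  · by_cases hai : a = i
    · subst hai; rw [ht'i]; exact hj 0
    · rw [ht'_ne a hai]; exact ht.2.1 a ha
  · obtain ⟨k, hk⟩ := ht.2.2 x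
    exact hreach k x hk

/-- Otherwise `i` could switch to the preferred edge, a Pareto improvement. -/
theorem exists_iterate_eq_of_lt (ht : IsArb t root) {r : Fin n → Fin n → ℕ}
    (hpar : ¬ ∃ (t' : Fin n → Fin n) (root' : Fin n), IsArb t' root' ∧
        (∀ i, r i (t' i) ≤ r i (t i)) ∧ ∃ i, r i (t' i) < r i (t i))
    {i j : Fin n} (hij : r i j < r i (t i)) : ∃ k, t^[k] j = i := by
  classical
  by_cases hi : i = root
  · exact hi ▸ ht.2.2 j
  by_contra! hj
  refine hpar ⟨_, root, ht.update hi hj, fun a => ?_, i, by rwa [Function.update_self]⟩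
  by_cases hai : a = i
  · subst hai; rw [Function.update_self]; exact hij.le
  · rw [Function.update_of_ne hai]

end IsArb

noncomputable def depth (t : Fin n → Fin n) (root x : Fin n) : ℕ := sInf {k | t^[k] x = root}

theorem IsArb.depth_lt_of_iterate_eq {t : Fin n → Fin n} {root : Fin n} (ht : IsArb t root)
    {x i : Fin n} {k : ℕ} (hk : t^[k] x = i) (hxi : x ≠ i) : depth t root i < depth t root x := by
  have hD : t^[depth t root x] x = root := Nat.sInf_mem (ht.2.2 x)
  have hk0 : k ≠ 0 := by rintro rfl; exact hxi hk
  rcases le_or_gt k (depth t root x) with hkD | hDk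
  · have : t^[depth t root x - k] i = root := by
      rw [← hk, ← Function.iterate_add_apply, Nat.sub_add_cancel hkD, hD]
    have : depth t root i ≤ depth t root x - k := Nat.sInf_le this
    omega
  · have hiroot : i = root := by
      rw [← hk, ← Nat.sub_add_cancel hDk.le, Function.iterate_add_apply, hD,
        Function.iterate_fixed ht.1]
    have hi0 : depth t root i = 0 := Nat.eq_zero_of_le_zero (Nat.sInf_le (by simpa using hiroot))
    have hx0 : depth t root x ≠ 0 := fun h => hxi (by rw [hiroot, ← hD, h]; rfl)
    omega

theorem ProducedA.eq_of_isArb_of_forall_le {r : Fin n → Fin n → ℕ}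
    (hr : ∀ i, Function.Injective (r i)) (hworst : ∀ i j : Fin n, j ≠ i → r i j < r i i)
    {t t' : Fin n → Fin n} {π : List (Fin n)} {root' : Fin n} (hπ : ∀ i, i ∈ π)
    (hprod : ProducedA r t π) (ht' : IsArb t' root') (hle : ∀ i, r i (t' i) ≤ r i (t i)) :
    t' = t := by
  by_contra hne
  obtain ⟨i₀, hi₀⟩ := Function.ne_iff.mp hne
  obtain ⟨i, -, hine, hagree⟩ :=
    exists_mem_forall_mem_prefixBefore_not (fun a => t' a ≠ t a) ⟨i₀, hπ i₀, hi₀⟩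
  have hlt : r i (t' i) < r i (t i) := (hle i).lt_of_ne fun h => hine (hr i h)
  have hti' : t' i ≠ i := by
    rintro h
    rw [h] at hlt
    by_cases hti : t i = i
    · exact hlt.ne (by rw [hti])
    · exact (hlt.trans (hworst i _ hti)).false
  have hforbidden : Relation.ReflTransGen (drel t (prefixBefore π i)) (t' i) i := by
    by_contra h
    exact (hprod i).2 _ h |>.not_gt hlt
  obtain ⟨m, hm⟩ := exists_iterate_eq_of_reflTransGen_drel hforbidden (by simpa using hagree)
  have hroot := ht'.eq_root_of_iterate_succ_eq (k := m) (by rwa [Function.iterate_succ_apply])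
  exact hti' (hroot ▸ ht'.1)

theorem IsArb.producedA_of_descendants_mem_prefixBefore {r : Fin n → Fin n → ℕ}
    {t : Fin n → Fin n} {root : Fin n} (ht : IsArb t root) {π : List (Fin n)}
    (hpar : ∀ i j, r i j < r i (t i) → ∃ k, t^[k] j = i)
    (hπ : ∀ i x, x ≠ i → (∃ k, t^[k] x = i) → x ∈ prefixBefore π i) :
    ProducedA r t π := by
  refine fun i => ⟨ht.not_reflTransGen_drel_apply _, fun j hj => ?_⟩
  by_contra! hij
  obtain ⟨k, hk⟩ := hpar i j hij
  exact hj (ht.reflTransGen_drel_of_iterate_eq (hπ i) k j hk)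

theorem IsArb.exists_producedA {r : Fin n → Fin n → ℕ} {t : Fin n → Fin n} {root : Fin n}
    (ht : IsArb t root) (hpar : ∀ i j, r i j < r i (t i) → ∃ k, t^[k] j = i) :
    ∃ π, IsSeq π ∧ ProducedA r t π := by
  let π := (List.finRange n).mergeSort fun a b => decide (depth t root b ≤ depth t root a)
  have hperm : π.Perm (List.finRange n) := List.mergeSort_perm _ _
  have hmem : ∀ x, x ∈ π := fun x => hperm.mem_iff.mpr (List.mem_finRange x)
  have hsorted : π.Pairwise fun a b => decide (depth t root b ≤ depth t root a) :=
    List.pairwise_mergeSort (fun _ _ _ h₁ h₂ => by simp only [decide_eq_true_eq] at *; omega)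
      (fun _ _ => by simp only [Bool.or_eq_true, decide_eq_true_eq]; omega) _
  refine ⟨π, ⟨hperm.nodup_iff.mpr (List.nodup_finRange n), hmem⟩,
    ht.producedA_of_descendants_mem_prefixBefore hpar fun i x hxi ⟨k, hk⟩ => ?_⟩
  refine mem_prefixBefore_of_pairwise hsorted (hmem i) (hmem x) hxi ?_
  simpa using ht.depth_lt_of_iterate_eq hk hxi

end

/-- an arborescence can be produced by a serial dictatorship iff it is
Pareto-optimal among arborescences w.r.t. the strict rankings `r`. -/
theorem stmt13 {n : ℕ} (r : Fin n → Fin n → ℕ) (hr : ∀ i, Function.Injective (r i))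
    (hworst : ∀ i j : Fin n, j ≠ i → r i j < r i i)
    (t : Fin n → Fin n) (root : Fin n) (ht : IsArb t root) :
    (∃ π, IsSeq π ∧ ProducedA r t π) ↔
      ¬ ∃ (t' : Fin n → Fin n) (root' : Fin n), IsArb t' root' ∧
          (∀ i, r i (t' i) ≤ r i (t i)) ∧ ∃ i, r i (t' i) < r i (t i) := by
  constructor
  · rintro ⟨π, hπ, hprod⟩ ⟨t', root', ht', hle, i, hlt⟩
    rw [hprod.eq_of_isArb_of_forall_le hr hworst hπ.2 ht' hle] at hlt
    exact hlt.false
  · exact fun hpar => ht.exists_producedA fun i j => ht.exists_iterate_eq_of_lt hpar
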